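/- Let α₁, α₂ : ℕ → ℂ be functions such that the radial Toeplitz kernels T_{α₁} and T_{α₂} both induce bounded operators on ℓ²(V_κ), and fix a sequence of vertices (v_n)_{n≥0} in V_κ with d(v_k, v_n) = |k−n| for all k, n ≥ 0. Then for every n ≥ 0 the sum (α₁ ⊛ α₂)(n) := Σ_{x∈V_κ} α₁(d(v₀,x)) α₂(d(x,v_n)) converges absolutely, and it equals: for n = 0, α₁(0)α₂(0) + Σ_{l=1}^∞ (κ+1)κ^{l−1} α₁(l)α₂(l); for n = 1, Σ_{l=0}^∞ κ^l [α₁(l)α₂(l+1) + α₁(l+1)α₂(l)]; and for n ≥ 2, Σ_{l=0}^∞ κ^l [α₁(l)α₂(l+n) + α₁(l+n)α₂(l)] + Σ_{i=1}^{n−1} α₁(i)α₂(n−i) + Σ_{i=1}^{n−1} Σ_{l=1}^∞ (κ−1)κ^{l−1} α₁(l+i)α₂(l+(n−i)). -/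

import Mathlib

open MeasureTheory

noncomputable section

open SimpleGraph
set_option linter.unusedSectionVars false

section TreeAux

variable {V : Type} [DecidableEq V] {G : SimpleGraph V}

/-- In a tree, every path has length equal to the distance between its endpoints. -/
theorem tree_length_eq_dist (hconn : G.Connected) (hacyc : G.IsAcyclic) {a b : V}
    (p : G.Walk a b) (hp : p.IsPath) : p.length = G.dist a b := by
  obtain ⟨q, hq, hql⟩ := hconn.exists_path_of_dist a b
  have h := hacyc.path_unique ⟨p, hp⟩ ⟨q, hq⟩
  rw [show p = q from congrArg Subtype.val h]
  exact hql

theorem concat_isPath {a x y : V} {p : G.Walk a x} (hp : p.IsPath) (h : G.Adj x y)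
    (hy : y ∉ p.support) : (p.concat h).IsPath := by
  rw [← SimpleGraph.Walk.isPath_reverse_iff, SimpleGraph.Walk.reverse_concat]
  rw [SimpleGraph.Walk.cons_isPath_iff]
  refine ⟨hp.reverse, ?_⟩
  simpa using hy

/-- Dichotomy: a neighbour is at distance one more or one less. -/
theorem tree_adj_dist (hconn : G.Connected) (hacyc : G.IsAcyclic) {x y : V}
    (hxy : G.Adj x y) (w : V) :
    G.dist w y = G.dist w x + 1 ∨ G.dist w x = G.dist w y + 1 := by
  obtain ⟨p, hp, hpl⟩ := hconn.exists_path_of_dist w x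
  by_cases hy : y ∈ p.support
  · right
    have h1 : (p.takeUntil y hy).length = G.dist w y :=
      tree_length_eq_dist hconn hacyc _ (hp.takeUntil hy)
    have h2 : (p.dropUntil y hy).length = G.dist y x :=
      tree_length_eq_dist hconn hacyc _ (hp.dropUntil hy)
    have h3 : (p.takeUntil y hy).length + (p.dropUntil y hy).length = p.length := by
      rw [← SimpleGraph.Walk.length_append, SimpleGraph.Walk.take_spec]
    have h4 : G.dist y x = 1 := SimpleGraph.dist_eq_one_iff_adj.mpr hxy.symm
    omega
  · left
    have : (p.concat hxy).length = G.dist w y :=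
      tree_length_eq_dist hconn hacyc _ (concat_isPath hp hxy hy)
    rw [SimpleGraph.Walk.length_concat] at this
    omega

/-- Existence of the parent towards `w`. -/
theorem tree_exists_parent (hconn : G.Connected) (hacyc : G.IsAcyclic) {w x : V} {k : ℕ}
    (h : G.dist w x = k + 1) : ∃ u, G.Adj x u ∧ G.dist w u = k := by
  obtain ⟨p, hp, hpl⟩ := hconn.exists_path_of_dist x w
  rw [SimpleGraph.dist_comm] at hpl
  cases p with
  | nil => rw [h] at hpl; simp at hpl
  | cons hadj q =>
    rename_i u
    refine ⟨u, hadj, ?_⟩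
    have hq : q.IsPath := hp.of_cons
    have := tree_length_eq_dist hconn hacyc q hq
    simp only [SimpleGraph.Walk.length_cons] at hpl
    rw [SimpleGraph.dist_comm]
    omega

/-- Uniqueness of the parent towards `w`. -/
theorem tree_parent_unique (hconn : G.Connected) (hacyc : G.IsAcyclic) {w x u₁ u₂ : V}
    (h₁ : G.Adj x u₁) (h₂ : G.Adj x u₂)
    (hd₁ : G.dist w u₁ + 1 = G.dist w x) (hd₂ : G.dist w u₂ + 1 = G.dist w x) :
    u₁ = u₂ := by
  obtain ⟨p₁, hp₁, hpl₁⟩ := hconn.exists_path_of_dist w u₁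
  obtain ⟨p₂, hp₂, hpl₂⟩ := hconn.exists_path_of_dist w u₂
  have hx₁ : x ∉ p₁.support := by
    intro hx
    have := tree_length_eq_dist hconn hacyc _ (hp₁.takeUntil hx)
    have := SimpleGraph.Walk.length_takeUntil_le p₁ hx
    omega
  have hx₂ : x ∉ p₂.support := by
    intro hx
    have := tree_length_eq_dist hconn hacyc _ (hp₂.takeUntil hx)
    have := SimpleGraph.Walk.length_takeUntil_le p₂ hx
    omega
  have hq₁ : (p₁.concat h₁.symm).IsPath := concat_isPath hp₁ h₁.symm hx₁
  have hq₂ : (p₂.concat h₂.symm).IsPath := concat_isPath hp₂ h₂.symm hx₂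
  have := hacyc.path_unique ⟨_, hq₁⟩ ⟨_, hq₂⟩
  have heq : p₁.concat h₁.symm = p₂.concat h₂.symm := congrArg Subtype.val this
  have := congrArg (fun q : G.Walk w x => q.reverse.getVert 1) heq
  simpa [SimpleGraph.Walk.reverse_concat] using this

end TreeAux

set_option maxHeartbeats 1000000

section TreeAux2
variable {V : Type} [DecidableEq V] {G : SimpleGraph V} {κ : ℕ}

/-- Two distinct parents at a vertex force it to lie between the two roots. -/
theorem tree_two_parents (hconn : G.Connected) (hacyc : G.IsAcyclic) {x u q w₁ w₂ : V}
    (hu : G.Adj x u) (hq : G.Adj x q) (hne : u ≠ q)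
    (hdu : G.dist w₁ u + 1 = G.dist w₁ x) (hdq : G.dist w₂ q + 1 = G.dist w₂ x) :
    G.dist w₁ w₂ = G.dist w₁ x + G.dist w₂ x := by
  have main : ∀ k : ℕ, ∀ x u q : V, G.dist w₁ x = k → G.Adj x u → G.Adj x q → u ≠ q →
      G.dist w₁ u + 1 = k → G.dist w₂ q + 1 = G.dist w₂ x →
      G.dist w₁ w₂ = k + G.dist w₂ x := by
    intro k
    induction k with
    | zero => intro x u q _ _ _ _ h5 _; omega
    | succ k ih =>
      intro x u q hx hu hq hne h5 h6
      have hku : G.dist w₁ u = k := by omega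
      rcases Nat.eq_zero_or_pos k with hk0 | hkpos
      · have huw : w₁ = u := hconn.dist_eq_zero_iff.mp (by omega)
        rcases tree_adj_dist hconn hacyc hu w₂ with hc | hc
        · have hcom : G.dist w₁ w₂ = G.dist w₂ u := by rw [← huw, SimpleGraph.dist_comm]
          omega
        · exact absurd (tree_parent_unique (w := w₂) hconn hacyc hu hq (by omega) (by omega)) hne
      · obtain ⟨u', hu', hud'⟩ := tree_exists_parent hconn hacyc
          (show G.dist w₁ u = (k - 1) + 1 by omega)
        have hxne : u' ≠ x := by
          intro h; rw [h] at hud'; omega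
        have h6' : G.dist w₂ x + 1 = G.dist w₂ u := by
          rcases tree_adj_dist hconn hacyc hu w₂ with hc | hc
          · exact hc.symm
          · exact absurd (tree_parent_unique (w := w₂) hconn hacyc hu hq (by omega) (by omega)) hne
        have hres := ih u u' x hku hu' hu.symm hxne (by omega) h6'
        omega
  have := main (G.dist w₁ x) x u q rfl hu hq hne hdu hdq
  omega

/-- Uniqueness of the point between two vertices at given distances. -/
theorem tree_between (hconn : G.Connected) (hacyc : G.IsAcyclic) :
    ∀ k : ℕ, ∀ {m : ℕ} {w z x y : V}, G.dist w z = k + m →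
      G.dist w x = k → G.dist z x = m → G.dist w y = k → G.dist z y = m → x = y := by
  intro k
  induction k with
  | zero =>
    intro m w z x y _ hx1 _ hy1 _
    have h1 : w = x := hconn.dist_eq_zero_iff.mp hx1
    have h2 : w = y := hconn.dist_eq_zero_iff.mp hy1
    rw [← h1, h2]
  | succ k ih =>
    intro m w z x y hwz hx1 hx2 hy1 hy2
    obtain ⟨u, hu, hud⟩ := tree_exists_parent hconn hacyc hx1
    have hu2 : G.dist z u = m + 1 := by
      rcases tree_adj_dist hconn hacyc hu z with hc | hc
      · omega
      · exfalso
        have ht := hconn.dist_triangle (u := w) (v := u) (w := z)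
        have hcm : G.dist u z = G.dist z u := SimpleGraph.dist_comm
        omega
    obtain ⟨u', hu', hud'⟩ := tree_exists_parent hconn hacyc hy1
    have hu2' : G.dist z u' = m + 1 := by
      rcases tree_adj_dist hconn hacyc hu' z with hc | hc
      · omega
      · exfalso
        have ht := hconn.dist_triangle (u := w) (v := u') (w := z)
        have hcm : G.dist u' z = G.dist z u' := SimpleGraph.dist_comm
        omega
    have huu : u = u' := ih (m := m + 1) (by omega) hud hu2 hud' hu2'
    rw [huu] at hu hud
    exact tree_parent_unique (w := z) hconn hacyc hu.symm hu'.symm (by omega) (by omega)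

end TreeAux2

section TreeAux3
variable {V : Type} [DecidableEq V] {G : SimpleGraph V} {κ : ℕ}

/-- Counting engine: a disjoint union of `c`-sized sets over a finite base. -/
theorem engine {A B : Set V} {c : ℕ} (hA : A.Finite) (C : V → Set V)
    (hfin : ∀ x, (C x).Finite) (hcard : ∀ x ∈ A, (C x).ncard = c)
    (hdisj : ∀ ⦃x y z⦄, x ∈ A → y ∈ A → z ∈ C x → z ∈ C y → x = y)
    (hB : B = ⋃ x ∈ A, C x) : B.Finite ∧ B.ncard = c * A.ncard := by
  classical
  set Bf : Finset V := hA.toFinset.biUnion (fun x => (hfin x).toFinset) with hBf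
  have hBeq : B = ↑Bf := by
    rw [hB]
    ext y
    simp [hBf, Set.Finite.mem_toFinset]
  constructor
  · rw [hBeq]; exact Bf.finite_toSet
  · rw [hBeq, Set.ncard_coe_finset]
    rw [Finset.card_biUnion]
    · rw [Finset.sum_congr rfl (fun x hx => ?_), Finset.sum_const,
        ← Set.ncard_eq_toFinset_card A hA, smul_eq_mul, mul_comm]
      rw [← Set.ncard_eq_toFinset_card (C x) (hfin x)]
      exact hcard x (hA.mem_toFinset.mp hx)
    · intro x hx y hy hxy
      rw [Function.onFun, Finset.disjoint_left]
      intro z hzx hzy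
      exact hxy (hdisj (hA.mem_toFinset.mp hx) (hA.mem_toFinset.mp hy)
        ((hfin x).mem_toFinset.mp hzx) ((hfin y).mem_toFinset.mp hzy))

theorem nbr_finite (hdeg : ∀ w : V, (G.neighborSet w).ncard = κ + 1) (x : V) :
    (G.neighborSet x).Finite := by
  by_contra h
  have h2 : (G.neighborSet x).Infinite := h
  have := h2.ncard
  rw [hdeg x] at this
  omega

theorem child1_finite (hdeg : ∀ w : V, (G.neighborSet w).ncard = κ + 1) (z x : V) :
    {y | G.Adj x y ∧ G.dist z y = G.dist z x + 1}.Finite :=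
  (nbr_finite hdeg x).subset (fun _ hy => hy.1)

theorem child2_finite (hdeg : ∀ w : V, (G.neighborSet w).ncard = κ + 1) (z₁ z₂ x : V) :
    {y | G.Adj x y ∧ G.dist z₁ y = G.dist z₁ x + 1 ∧ G.dist z₂ y = G.dist z₂ x + 1}.Finite :=
  (nbr_finite hdeg x).subset (fun _ hy => hy.1)

theorem child1_ncard (hconn : G.Connected) (hacyc : G.IsAcyclic)
    (hdeg : ∀ w : V, (G.neighborSet w).ncard = κ + 1) {z x : V} (h : G.dist z x ≠ 0) :
    {y | G.Adj x y ∧ G.dist z y = G.dist z x + 1}.ncard = κ := by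
  obtain ⟨u, hu, hud⟩ := tree_exists_parent hconn hacyc
    (show G.dist z x = (G.dist z x - 1) + 1 by omega)
  have hset : {y | G.Adj x y ∧ G.dist z y = G.dist z x + 1} = G.neighborSet x \ {u} := by
    ext y
    simp only [Set.mem_setOf_eq, Set.mem_diff, mem_neighborSet, Set.mem_singleton_iff]
    constructor
    · rintro ⟨hadj, hd⟩
      exact ⟨hadj, fun hyu => by rw [hyu] at hd; omega⟩
    · rintro ⟨hadj, hyu⟩
      refine ⟨hadj, ?_⟩
      rcases tree_adj_dist hconn hacyc hadj z with hc | hc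
      · exact hc
      · exact absurd (tree_parent_unique (w := z) hconn hacyc hadj hu (by omega) (by omega)) hyu
  rw [hset, Set.ncard_diff_singleton_of_mem (show u ∈ G.neighborSet x from hu), hdeg x]
  omega

theorem child1_self (hconn : G.Connected)
    (hdeg : ∀ w : V, (G.neighborSet w).ncard = κ + 1) (w : V) :
    {y | G.Adj w y ∧ G.dist w y = G.dist w w + 1}.ncard = κ + 1 := by
  have hset : {y | G.Adj w y ∧ G.dist w y = G.dist w w + 1} = G.neighborSet w := by
    ext y
    simp only [Set.mem_setOf_eq, mem_neighborSet, SimpleGraph.dist_self, zero_add]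
    exact ⟨fun h => h.1, fun h => ⟨h, SimpleGraph.dist_eq_one_iff_adj.mpr h⟩⟩
  rw [hset, hdeg w]

/-- Off the geodesic, the two parents coincide, so the doubly-ascending
neighbours are just the `z₁`-ascending ones. -/
theorem child2_eq_child1 (hconn : G.Connected) (hacyc : G.IsAcyclic)
    {z₁ z₂ x : V} (h₁ : G.dist z₁ x ≠ 0) (h₂ : G.dist z₂ x ≠ 0)
    (hne : G.dist z₁ z₂ ≠ G.dist z₁ x + G.dist z₂ x) :
    {y | G.Adj x y ∧ G.dist z₁ y = G.dist z₁ x + 1 ∧ G.dist z₂ y = G.dist z₂ x + 1} =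
      {y | G.Adj x y ∧ G.dist z₁ y = G.dist z₁ x + 1} := by
  obtain ⟨u₁, hu₁, hud₁⟩ := tree_exists_parent hconn hacyc
    (show G.dist z₁ x = (G.dist z₁ x - 1) + 1 by omega)
  obtain ⟨u₂, hu₂, hud₂⟩ := tree_exists_parent hconn hacyc
    (show G.dist z₂ x = (G.dist z₂ x - 1) + 1 by omega)
  have huu : u₁ = u₂ := by
    by_contra hc
    exact hne (tree_two_parents hconn hacyc hu₁ hu₂ hc (by omega) (by omega))
  ext y
  simp only [Set.mem_setOf_eq]
  constructor
  · rintro ⟨hadj, hd₁, _⟩; exact ⟨hadj, hd₁⟩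
  · rintro ⟨hadj, hd₁⟩
    refine ⟨hadj, hd₁, ?_⟩
    rcases tree_adj_dist hconn hacyc hadj z₂ with hc | hc
    · exact hc
    · exfalso
      have hy1 : y = u₂ := tree_parent_unique (w := z₂) hconn hacyc hadj hu₂ (by omega) (by omega)
      rw [hy1, ← huu] at hd₁
      omega

/-- On the geodesic, the doubly-ascending neighbours number `κ - 1`. -/
theorem child2_base (hconn : G.Connected) (hacyc : G.IsAcyclic)
    (hdeg : ∀ w : V, (G.neighborSet w).ncard = κ + 1) {z₁ z₂ w : V}
    (h₁ : G.dist z₁ w ≠ 0) (h₂ : G.dist z₂ w ≠ 0)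
    (hgeo : G.dist z₁ z₂ = G.dist z₁ w + G.dist z₂ w) :
    {y | G.Adj w y ∧ G.dist z₁ y = G.dist z₁ w + 1 ∧ G.dist z₂ y = G.dist z₂ w + 1}.ncard
      = κ - 1 := by
  obtain ⟨u₁, hu₁, hud₁⟩ := tree_exists_parent hconn hacyc
    (show G.dist z₁ w = (G.dist z₁ w - 1) + 1 by omega)
  obtain ⟨u₂, hu₂, hud₂⟩ := tree_exists_parent hconn hacyc
    (show G.dist z₂ w = (G.dist z₂ w - 1) + 1 by omega)
  have huu : u₁ ≠ u₂ := by
    intro h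
    have ht := hconn.dist_triangle (u := z₁) (v := u₁) (w := z₂)
    have hcm : G.dist u₁ z₂ = G.dist z₂ u₂ := by rw [h, SimpleGraph.dist_comm]
    omega
  have hset : {y | G.Adj w y ∧ G.dist z₁ y = G.dist z₁ w + 1 ∧ G.dist z₂ y = G.dist z₂ w + 1}
      = G.neighborSet w \ {u₁, u₂} := by
    ext y
    simp only [Set.mem_setOf_eq, Set.mem_diff, mem_neighborSet, Set.mem_insert_iff,
      Set.mem_singleton_iff]
    constructor
    · rintro ⟨hadj, hd₁, hd₂⟩
      refine ⟨hadj, ?_⟩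
      rintro (h | h) <;> rw [h] at hd₁ hd₂ <;> omega
    · rintro ⟨hadj, hyu⟩
      push_neg at hyu
      refine ⟨hadj, ?_, ?_⟩
      · rcases tree_adj_dist hconn hacyc hadj z₁ with hc | hc
        · exact hc
        · exact absurd (tree_parent_unique (w := z₁) hconn hacyc hadj hu₁ (by omega) (by omega))
            hyu.1
      · rcases tree_adj_dist hconn hacyc hadj z₂ with hc | hc
        · exact hc
        · exact absurd (tree_parent_unique (w := z₂) hconn hacyc hadj hu₂ (by omega) (by omega))
            hyu.2
  have hsub : ({u₁, u₂} : Set V) ⊆ G.neighborSet w := by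
    intro y hy
    simp only [Set.mem_insert_iff, Set.mem_singleton_iff] at hy
    rcases hy with rfl | rfl
    · exact hu₁
    · exact hu₂
  rw [hset, Set.ncard_diff hsub (Set.toFinite _), hdeg w, Set.ncard_pair huu]
  omega
end TreeAux3

section TreeAux4
variable {V : Type} [DecidableEq V] {G : SimpleGraph V} {κ : ℕ}

/-- Count of the branch `{x : d(w,x) = l, d(z,x) = m + l}` hanging at `w` away from `z`. -/
theorem count_one_sided (hconn : G.Connected) (hacyc : G.IsAcyclic)
    (hdeg : ∀ w : V, (G.neighborSet w).ncard = κ + 1) {w z : V} {m : ℕ}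
    (hm : m ≠ 0) (hwz : G.dist z w = m) :
    ∀ l, ({x | G.dist w x = l ∧ G.dist z x = m + l}).Finite ∧
      ({x | G.dist w x = l ∧ G.dist z x = m + l}).ncard = κ ^ l := by
  intro l
  induction l with
  | zero =>
    have hs : {x | G.dist w x = 0 ∧ G.dist z x = m + 0} = {w} := by
      ext x
      simp only [Set.mem_setOf_eq, Set.mem_singleton_iff]
      constructor
      · rintro ⟨h1, _⟩
        exact (hconn.dist_eq_zero_iff.mp h1).symm
      · rintro rfl
        exact ⟨SimpleGraph.dist_self, by omega⟩
    rw [hs]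
    exact ⟨Set.finite_singleton w, by simp⟩
  | succ l ih =>
    have hcover : {x | G.dist w x = l + 1 ∧ G.dist z x = m + (l + 1)} =
        ⋃ x ∈ {x | G.dist w x = l ∧ G.dist z x = m + l},
          {y | G.Adj x y ∧ G.dist z y = G.dist z x + 1} := by
      ext y
      simp only [Set.mem_setOf_eq, Set.mem_iUnion, exists_prop]
      constructor
      · rintro ⟨hw1, hz1⟩
        obtain ⟨p, hp, hpd⟩ := tree_exists_parent hconn hacyc
          (show G.dist z y = (m + l) + 1 by omega)
        have hwp : G.dist w p = l := by
          rcases tree_adj_dist hconn hacyc hp w with hc | hc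
          · exfalso
            obtain ⟨p', hp', hpd'⟩ := tree_exists_parent hconn hacyc
              (show G.dist w y = l + 1 from hw1)
            have hne : p' ≠ p := by intro h; rw [h] at hpd'; omega
            have hzp' : G.dist z p' = m + l := by
              rcases tree_adj_dist hconn hacyc hp' z with hc2 | hc2
              · exfalso
                have ht := hconn.dist_triangle (u := z) (v := w) (w := p')
                have hcm : G.dist w p' = G.dist z p' - m ∨ True := Or.inr trivial
                omega
              · omega
            exact hne (tree_parent_unique (w := z) hconn hacyc hp' hp (by omega) (by omega))
          · omega
        exact ⟨p, ⟨hwp, by omega⟩, hp.symm, by omega⟩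
      · rintro ⟨x, ⟨hwx, hzx⟩, hadj, hdz⟩
        refine ⟨?_, by omega⟩
        rcases tree_adj_dist hconn hacyc hadj w with hc | hc
        · omega
        · exfalso
          have ht := hconn.dist_triangle (u := z) (v := w) (w := y)
          omega
    obtain ⟨hfin, hcard⟩ := ih
    obtain ⟨hf, hc⟩ := engine hfin _ (child1_finite hdeg z)
      (fun x hx => child1_ncard hconn hacyc hdeg (show G.dist z x ≠ 0 by
        have := hx.2; omega))
      (fun x y c hx hy hcx hcy => by
        simp only [Set.mem_setOf_eq] at hcx hcy
        exact tree_parent_unique (w := z) hconn hacyc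
          hcx.1.symm hcy.1.symm (by omega) (by omega))
      hcover
    refine ⟨hf, ?_⟩
    rw [hc, hcard, pow_succ, mul_comm]

/-- Count of the sphere of radius `l` about `w`. -/
theorem count_sphere (hconn : G.Connected) (hacyc : G.IsAcyclic)
    (hdeg : ∀ w : V, (G.neighborSet w).ncard = κ + 1) (w : V) :
    ∀ l, ({x | G.dist w x = l}).Finite ∧
      ({x | G.dist w x = l}).ncard = (if l = 0 then 1 else (κ + 1) * κ ^ (l - 1)) := by
  intro l
  induction l with
  | zero =>
    have hs : {x | G.dist w x = 0} = {w} := by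
      ext x
      simp only [Set.mem_setOf_eq, Set.mem_singleton_iff]
      constructor
      · intro h1
        exact (hconn.dist_eq_zero_iff.mp h1).symm
      · rintro rfl
        exact SimpleGraph.dist_self
    rw [hs]
    exact ⟨Set.finite_singleton w, by simp⟩
  | succ l ih =>
    have hcover : {x | G.dist w x = l + 1} =
        ⋃ x ∈ {x | G.dist w x = l}, {y | G.Adj x y ∧ G.dist w y = G.dist w x + 1} := by
      ext y
      simp only [Set.mem_setOf_eq, Set.mem_iUnion, exists_prop]
      constructor
      · intro hw1
        obtain ⟨p, hp, hpd⟩ := tree_exists_parent hconn hacyc (show G.dist w y = l + 1 from hw1)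
        exact ⟨p, hpd, hp.symm, by omega⟩
      · rintro ⟨x, hwx, hadj, hdz⟩
        omega
    obtain ⟨hfin, hcard⟩ := ih
    rcases Nat.eq_zero_or_pos l with hl0 | hlpos
    · subst hl0
      obtain ⟨hf, hc⟩ := engine hfin _ (child1_finite hdeg w)
        (fun x hx => by
          have hxw : x = w := (hconn.dist_eq_zero_iff.mp hx).symm
          subst hxw
          exact child1_self hconn hdeg x)
        (fun x y c hx hy hcx hcy => by
          have h1 : x = w := (hconn.dist_eq_zero_iff.mp hx).symm
          have h2 : y = w := (hconn.dist_eq_zero_iff.mp hy).symm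
          rw [h1, h2])
        hcover
      refine ⟨hf, ?_⟩
      rw [hc, hcard]
      simp
    · obtain ⟨hf, hc⟩ := engine hfin _ (child1_finite hdeg w)
        (fun x hx => child1_ncard hconn hacyc hdeg (show G.dist w x ≠ 0 by
          have : G.dist w x = l := hx; omega))
        (fun x y c hx hy hcx hcy => by
          simp only [Set.mem_setOf_eq] at hcx hcy
          exact tree_parent_unique (w := w) hconn hacyc
            hcx.1.symm hcy.1.symm (by omega) (by omega))
        hcover
      refine ⟨hf, ?_⟩
      rw [hc, hcard]
      have h1 : ¬(l = 0) := by omega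
      have h2 : ¬(l + 1 = 0) := by omega
      obtain ⟨j, rfl⟩ : ∃ j, l = j + 1 := ⟨l - 1, by omega⟩
      rw [if_neg h1, if_neg h2]
      simp only [Nat.add_sub_cancel]
      rw [pow_succ]
      ring

/-- Count of the fiber hanging at an interior geodesic point `w`. -/
theorem count_interior (hconn : G.Connected) (hacyc : G.IsAcyclic)
    (hdeg : ∀ w : V, (G.neighborSet w).ncard = κ + 1) {w z₁ z₂ : V} {m₁ m₂ : ℕ}
    (hm₁ : m₁ ≠ 0) (hm₂ : m₂ ≠ 0)
    (h₁ : G.dist z₁ w = m₁) (h₂ : G.dist z₂ w = m₂) (h₁₂ : G.dist z₁ z₂ = m₁ + m₂) :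
    ∀ l, ({x | G.dist z₁ x = m₁ + l ∧ G.dist z₂ x = m₂ + l}).Finite ∧
      ({x | G.dist z₁ x = m₁ + l ∧ G.dist z₂ x = m₂ + l}).ncard =
        (if l = 0 then 1 else (κ - 1) * κ ^ (l - 1)) := by
  intro l
  induction l with
  | zero =>
    have hs : {x | G.dist z₁ x = m₁ + 0 ∧ G.dist z₂ x = m₂ + 0} = {w} := by
      ext x
      simp only [Set.mem_setOf_eq, Set.mem_singleton_iff]
      constructor
      · rintro ⟨ha, hb⟩
        exact tree_between hconn hacyc m₁ (m := m₂) h₁₂ (by omega) (by omega) h₁ h₂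
      · rintro rfl
        exact ⟨by omega, by omega⟩
    rw [hs]
    exact ⟨Set.finite_singleton w, by simp⟩
  | succ l ih =>
    have hcover : {x | G.dist z₁ x = m₁ + (l + 1) ∧ G.dist z₂ x = m₂ + (l + 1)} =
        ⋃ x ∈ {x | G.dist z₁ x = m₁ + l ∧ G.dist z₂ x = m₂ + l},
          {y | G.Adj x y ∧ G.dist z₁ y = G.dist z₁ x + 1 ∧ G.dist z₂ y = G.dist z₂ x + 1} := by
      ext y
      simp only [Set.mem_setOf_eq, Set.mem_iUnion, exists_prop]
      constructor
      · rintro ⟨ha, hb⟩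
        obtain ⟨p, hp, hpd⟩ := tree_exists_parent hconn hacyc
          (show G.dist z₁ y = (m₁ + l) + 1 by omega)
        have hzp : G.dist z₂ p = m₂ + l := by
          rcases tree_adj_dist hconn hacyc hp z₂ with hc | hc
          · exfalso
            obtain ⟨q, hq, hqd⟩ := tree_exists_parent hconn hacyc
              (show G.dist z₂ y = (m₂ + l) + 1 by omega)
            have hne : p ≠ q := by intro h; rw [h] at hc; omega
            have := tree_two_parents (w₁ := z₁) (w₂ := z₂) hconn hacyc hp hq hne
              (by omega) (by omega)
            omega
          · omega
        exact ⟨p, ⟨by omega, hzp⟩, hp.symm, by omega, by omega⟩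
      · rintro ⟨x, ⟨hax, hbx⟩, hadj, hd₁, hd₂⟩
        exact ⟨by omega, by omega⟩
    obtain ⟨hfin, hcard⟩ := ih
    rcases Nat.eq_zero_or_pos l with hl0 | hlpos
    · subst hl0
      obtain ⟨hf, hc⟩ := engine hfin _ (child2_finite hdeg z₁ z₂)
        (fun x hx => by
          have hxw : x = w := by
            refine tree_between hconn hacyc m₁ (m := m₂) h₁₂ ?_ ?_ h₁ h₂
            · have := hx.1; omega
            · have := hx.2; omega
          subst hxw
          rw [child2_base hconn hacyc hdeg (by omega) (by omega) (by omega)])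
        (fun x y c hx hy hcx hcy => by
          simp only [Set.mem_setOf_eq] at hcx hcy
          exact tree_parent_unique (w := z₁) hconn hacyc
            hcx.1.symm hcy.1.symm (by omega) (by omega))
        hcover
      refine ⟨hf, ?_⟩
      rw [hc, hcard]
      simp
    · obtain ⟨hf, hc⟩ := engine hfin _ (child2_finite hdeg z₁ z₂)
        (fun x hx => by
          have hd1 : G.dist z₁ x = m₁ + l := hx.1
          have hd2 : G.dist z₂ x = m₂ + l := hx.2
          rw [child2_eq_child1 hconn hacyc (by omega) (by omega) (by omega)]
          exact child1_ncard hconn hacyc hdeg (by omega))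
        (fun x y c hx hy hcx hcy => by
          simp only [Set.mem_setOf_eq] at hcx hcy
          exact tree_parent_unique (w := z₁) hconn hacyc
            hcx.1.symm hcy.1.symm (by omega) (by omega))
        hcover
      refine ⟨hf, ?_⟩
      rw [hc, hcard]
      have h1 : ¬(l = 0) := by omega
      have h2 : ¬(l + 1 = 0) := by omega
      obtain ⟨j, rfl⟩ : ∃ j, l = j + 1 := ⟨l - 1, by omega⟩
      rw [if_neg h1, if_neg h2]
      simp only [Nat.add_sub_cancel]
      rw [pow_succ]
      ring
end TreeAux4


/-- Explicit computation of the convolution-type product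
`(α₁ ⊛ α₂)(n) = Σ_{x∈V_κ} α₁(d(v₀,x)) α₂(d(x,v_n))` for radial Toeplitz kernels inducing
bounded operators on `ℓ²(V_κ)`, along a geodesic ray `(v_n)` in the Cayley tree. -/
theorem radial_toeplitz_convolution_formula (κ : ℕ) (hκ : 1 ≤ κ) (V : Type) [Countable V]
    [DecidableEq V]
    (G : SimpleGraph V) (hconn : G.Connected) (hacyc : G.IsAcyclic)
    (hdeg : ∀ w : V, (G.neighborSet w).ncard = κ + 1)
    (α₁ α₂ : ℕ → ℂ)
    (A₁ A₂ : lp (fun _ : V => ℂ) 2 →L[ℂ] lp (fun _ : V => ℂ) 2)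
    (hA₁ : ∀ x y : V,
      (inner ℂ (lp.single 2 x (1 : ℂ)) (A₁ (lp.single 2 y (1 : ℂ))) : ℂ) = α₁ (G.dist x y))
    (hA₂ : ∀ x y : V,
      (inner ℂ (lp.single 2 x (1 : ℂ)) (A₂ (lp.single 2 y (1 : ℂ))) : ℂ) = α₂ (G.dist x y))
    (v : ℕ → V) (hv : ∀ k n : ℕ, G.dist (v k) (v n) = Nat.dist k n) (n : ℕ) :
    Summable (fun x : V => ‖α₁ (G.dist (v 0) x) * α₂ (G.dist x (v n))‖) ∧
    (∑' x : V, α₁ (G.dist (v 0) x) * α₂ (G.dist x (v n))) =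
      if n = 0 then
        α₁ 0 * α₂ 0 + ∑' l : ℕ, ((κ : ℂ) + 1) * (κ : ℂ) ^ l * (α₁ (l + 1) * α₂ (l + 1))
      else if n = 1 then
        ∑' l : ℕ, (κ : ℂ) ^ l * (α₁ l * α₂ (l + 1) + α₁ (l + 1) * α₂ l)
      else
        (∑' l : ℕ, (κ : ℂ) ^ l * (α₁ l * α₂ (l + n) + α₁ (l + n) * α₂ l))
          + (∑ i ∈ Finset.Ioo 0 n, α₁ i * α₂ (n - i))
          + (∑ i ∈ Finset.Ioo 0 n,
              ∑' l : ℕ, ((κ : ℂ) - 1) * (κ : ℂ) ^ l * (α₁ (l + 1 + i) * α₂ (l + 1 + (n - i)))) := by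
  classical
  have hd0n : G.dist (v 0) (v n) = n := by rw [hv 0 n, Nat.dist_zero_left]
  have hdn0 : G.dist (v n) (v 0) = n := by rw [hv n 0, Nat.dist_zero_right]
  -- coordinates of the two lp elements
  have hf : ∀ x : V, (A₁ (lp.single 2 (v 0) (1 : ℂ))) x = α₁ (G.dist (v 0) x) := by
    intro x
    have h := hA₁ x (v 0)
    rw [lp.inner_single_left] at h
    simp only [RCLike.inner_apply, map_one, one_mul, mul_one] at h
    rw [h, SimpleGraph.dist_comm]
  have hg : ∀ x : V, (A₂ (lp.single 2 (v n) (1 : ℂ))) x = α₂ (G.dist x (v n)) := by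
    intro x
    have h := hA₂ x (v n)
    rw [lp.inner_single_left] at h
    simp only [RCLike.inner_apply, map_one, one_mul, mul_one] at h
    rw [h]
  have hf2 : Summable (fun x : V => ‖(A₁ (lp.single 2 (v 0) (1 : ℂ))) x‖ ^ 2) := by
    have h := (lp.memℓp (A₁ (lp.single 2 (v 0) (1 : ℂ)))).summable (p := 2) (by norm_num)
    refine h.congr fun x => ?_
    have h2 : ((2 : ENNReal)).toReal = ((2 : ℕ) : ℝ) := by norm_num
    rw [h2, Real.rpow_natCast]
  have hg2 : Summable (fun x : V => ‖(A₂ (lp.single 2 (v n) (1 : ℂ))) x‖ ^ 2) := by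
    have h := (lp.memℓp (A₂ (lp.single 2 (v n) (1 : ℂ)))).summable (p := 2) (by norm_num)
    refine h.congr fun x => ?_
    have h2 : ((2 : ENNReal)).toReal = ((2 : ℕ) : ℝ) := by norm_num
    rw [h2, Real.rpow_natCast]
  have hnorm : Summable (fun x : V => ‖α₁ (G.dist (v 0) x) * α₂ (G.dist x (v n))‖) := by
    refine Summable.of_nonneg_of_le (fun _ => norm_nonneg _) (fun x => ?_)
      (((hf2.add hg2).div_const 2))
    rw [← hf x, ← hg x, norm_mul]
    nlinarith [sq_nonneg (‖(A₁ (lp.single 2 (v 0) (1 : ℂ))) x‖ - ‖(A₂ (lp.single 2 (v n) (1 : ℂ))) x‖),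
      norm_nonneg ((A₁ (lp.single 2 (v 0) (1 : ℂ))) x),
      norm_nonneg ((A₂ (lp.single 2 (v n) (1 : ℂ))) x)]
  refine ⟨hnorm, ?_⟩
  have hsum : Summable (fun x : V => α₁ (G.dist (v 0) x) * α₂ (G.dist x (v n))) :=
    Summable.of_norm hnorm
  -- parity along walks
  have hwalkpar : ∀ {a b : V} (p : G.Walk a b) (w : V),
      (G.dist w a + G.dist w b + p.length) % 2 = 0 := by
    intro a b p w
    induction p with
    | nil => simp only [SimpleGraph.Walk.length_nil]; omega
    | cons h q ih =>
      rcases tree_adj_dist hconn hacyc h w with hc | hc <;>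
        simp only [SimpleGraph.Walk.length_cons] <;> omega
  have hpar : ∀ x : V, (G.dist (v 0) x + G.dist (v n) x + n) % 2 = 0 := by
    intro x
    obtain ⟨p, hp⟩ := hconn.exists_walk_length_eq_dist (v 0) (v n)
    have h := hwalkpar p x
    have c1 : G.dist x (v 0) = G.dist (v 0) x := SimpleGraph.dist_comm
    have c2 : G.dist x (v n) = G.dist (v n) x := SimpleGraph.dist_comm
    omega
  have htri1 : ∀ x, G.dist (v 0) x ≤ n + G.dist (v n) x := by
    intro x; have := hconn.dist_triangle (u := v 0) (v := v n) (w := x); omega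
  have htri2 : ∀ x, G.dist (v n) x ≤ n + G.dist (v 0) x := by
    intro x; have := hconn.dist_triangle (u := v n) (v := v 0) (w := x); omega
  have htri3 : ∀ x, n ≤ G.dist (v 0) x + G.dist (v n) x := by
    intro x
    have h := hconn.dist_triangle (u := v 0) (v := x) (w := v n)
    have c2 : G.dist x (v n) = G.dist (v n) x := SimpleGraph.dist_comm
    omega
  -- the fibers
  set F : ℕ → ℕ → Set V := fun i l =>
    {x | G.dist (v 0) x = i + l ∧ G.dist (v n) x = (n - i) + l} with hFdef
  have hmem : ∀ x : V, ∃ p : ℕ × ℕ, p.1 ≤ n ∧ G.dist (v 0) x = p.1 + p.2 ∧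
      G.dist (v n) x = (n - p.1) + p.2 := by
    intro x
    refine ⟨⟨(G.dist (v 0) x + n - G.dist (v n) x) / 2,
      (G.dist (v 0) x + G.dist (v n) x - n) / 2⟩, ?_, ?_, ?_⟩ <;>
      · have h1 := hpar x; have h2 := htri1 x; have h3 := htri2 x; have h4 := htri3 x
        simp only []
        omega
  choose P hP1 hP2 hP3 using hmem
  have hmemF : ∀ x : V, x ∈ F (P x).1 (P x).2 := fun x => ⟨hP2 x, hP3 x⟩
  let e : V ≃ Σ q : Fin (n+1) × ℕ, {y // y ∈ F q.1.1 q.2} :=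
  { toFun := fun x => ⟨(⟨(P x).1, by have := hP1 x; omega⟩, (P x).2), ⟨x, hmemF x⟩⟩
    invFun := fun s => s.2.1
    left_inv := fun x => rfl
    right_inv := by
      rintro ⟨⟨⟨i₀, hi₀⟩, l₀⟩, y, hy⟩
      have hy1 : G.dist (v 0) y = i₀ + l₀ := hy.1
      have hy2 : G.dist (v n) y = (n - i₀) + l₀ := hy.2
      have e1 := hP1 y; have e2 := hP2 y; have e3 := hP3 y
      have h1 : (P y).1 = i₀ := by omega
      have h2 : (P y).2 = l₀ := by omega
      exact Sigma.subtype_ext (Prod.ext (Fin.ext h1) h2) rfl }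
  have hsig : Summable (fun s : Σ q : Fin (n+1) × ℕ, {y // y ∈ F q.1.1 q.2} =>
      α₁ (G.dist (v 0) (s.2 : V)) * α₂ (G.dist (s.2 : V) (v n))) :=
    (Equiv.summable_iff e.symm).mpr hsum
  have step1 : (∑' x : V, α₁ (G.dist (v 0) x) * α₂ (G.dist x (v n))) =
      ∑' s : Σ q : Fin (n+1) × ℕ, {y // y ∈ F q.1.1 q.2},
        α₁ (G.dist (v 0) (s.2 : V)) * α₂ (G.dist (s.2 : V) (v n)) :=
    (Equiv.tsum_eq e.symm _).symm
  have step2 : (∑' s : Σ q : Fin (n+1) × ℕ, {y // y ∈ F q.1.1 q.2},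
        α₁ (G.dist (v 0) (s.2 : V)) * α₂ (G.dist (s.2 : V) (v n))) =
      ∑' q : Fin (n+1) × ℕ, ∑' y : {y // y ∈ F q.1.1 q.2},
        α₁ (G.dist (v 0) (y : V)) * α₂ (G.dist (y : V) (v n)) := Summable.tsum_sigma hsig
  have hcount : ∀ q : Fin (n+1) × ℕ,
      (∑' y : {y // y ∈ F q.1.1 q.2},
        α₁ (G.dist (v 0) (y : V)) * α₂ (G.dist (y : V) (v n))) =
      ((F q.1.1 q.2).ncard : ℂ) * (α₁ (q.1.1 + q.2) * α₂ ((n - q.1.1) + q.2)) := by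
    intro q
    have hcst : ∀ y : {y // y ∈ F q.1.1 q.2},
        α₁ (G.dist (v 0) (y : V)) * α₂ (G.dist (y : V) (v n)) =
        α₁ (q.1.1 + q.2) * α₂ ((n - q.1.1) + q.2) := by
      rintro ⟨y, hy1, hy2⟩
      rw [show G.dist (↑(⟨y, ⟨hy1, hy2⟩⟩ : {y // y ∈ F q.1.1 q.2})) (v n) = G.dist (v n) y from
        SimpleGraph.dist_comm]
      rw [show G.dist (v 0) (↑(⟨y, ⟨hy1, hy2⟩⟩ : {y // y ∈ F q.1.1 q.2})) = G.dist (v 0) y from rfl]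
      rw [hy1, hy2]
    rw [tsum_congr hcst, tsum_const, Nat.card_coe_set_eq, nsmul_eq_mul]
  have hcsum : Summable (fun q : Fin (n+1) × ℕ =>
      ((F q.1.1 q.2).ncard : ℂ) * (α₁ (q.1.1 + q.2) * α₂ ((n - q.1.1) + q.2))) :=
    (hsig.sigma).congr hcount
  have hslN : ∀ i : ℕ, i ≤ n → Summable (fun l : ℕ =>
      ((F i l).ncard : ℂ) * (α₁ (i + l) * α₂ ((n - i) + l))) :=
    fun i hi => hcsum.prod_factor ⟨i, by omega⟩
  have step4 : (∑' x : V, α₁ (G.dist (v 0) x) * α₂ (G.dist x (v n))) =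
      ∑ i ∈ Finset.range (n+1), ∑' l : ℕ,
        ((F i l).ncard : ℂ) * (α₁ (i + l) * α₂ ((n - i) + l)) := by
    rw [step1, step2, tsum_congr hcount, Summable.tsum_prod' hcsum (fun b => hcsum.prod_factor b),
      tsum_fintype]
    exact Fin.sum_univ_eq_sum_range
      (fun i => ∑' l : ℕ, ((F i l).ncard : ℂ) * (α₁ (i + l) * α₂ ((n - i) + l))) (n+1)
  -- counts
  have hC0 : n ≠ 0 → ∀ l, (F 0 l).ncard = κ ^ l := by
    intro hn l
    have h := count_one_sided hconn hacyc hdeg (w := v 0) (z := v n) (m := n) hn hdn0 l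
    have hset : {x | G.dist (v 0) x = l ∧ G.dist (v n) x = n + l} = F 0 l := by
      ext x; simp only [hFdef, Set.mem_setOf_eq]; omega
    rw [← hset]; exact h.2
  have hCn : n ≠ 0 → ∀ l, (F n l).ncard = κ ^ l := by
    intro hn l
    have h := count_one_sided hconn hacyc hdeg (w := v n) (z := v 0) (m := n) hn hd0n l
    have hset : {x | G.dist (v n) x = l ∧ G.dist (v 0) x = n + l} = F n l := by
      ext x; simp only [hFdef, Set.mem_setOf_eq]; omega
    rw [← hset]; exact h.2
  have hCi : ∀ i, 0 < i → i < n →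
      (F i 0).ncard = 1 ∧ ∀ l, (F i (l+1)).ncard = (κ - 1) * κ ^ l := by
    intro i h0 h1
    have hz1 : G.dist (v 0) (v i) = i := by rw [hv 0 i, Nat.dist_zero_left]
    have hz2 : G.dist (v n) (v i) = n - i := by
      rw [hv n i]; exact Nat.dist_eq_sub_of_le_right (le_of_lt h1)
    have h := count_interior hconn hacyc hdeg (w := v i) (z₁ := v 0) (z₂ := v n)
      (m₁ := i) (m₂ := n - i) (by omega) (by omega) hz1 hz2 (by rw [hd0n]; omega)
    constructor
    · have h2 := (h 0).2
      rw [if_pos rfl] at h2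
      exact h2
    · intro l
      have h2 := (h (l+1)).2
      rw [if_neg (by omega)] at h2
      simpa using h2
  rw [step4]
  by_cases hn0 : n = 0
  · subst hn0
    rw [if_pos rfl]
    have hSph := count_sphere hconn hacyc hdeg (v 0)
    have hF0 : ∀ l, (F 0 l).ncard = if l = 0 then 1 else (κ + 1) * κ ^ (l - 1) := by
      intro l
      have hset : {x | G.dist (v 0) x = l} = F 0 l := by
        ext x; simp only [hFdef, Set.mem_setOf_eq]; omega
      rw [← hset]; exact (hSph l).2
    rw [Finset.sum_range_one]
    rw [Summable.tsum_eq_zero_add (hslN 0 (by omega))]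
    congr 1
    · rw [hF0 0]
      norm_num
    · refine tsum_congr fun l => ?_
      rw [hF0 (l+1), if_neg (by omega)]
      simp only [Nat.add_sub_cancel, Nat.zero_add, Nat.sub_zero]
      push_cast
      ring
  · rcases Nat.lt_or_ge n 2 with hn2 | hn2
    · -- n = 1
      have hn1 : n = 1 := by omega
      subst hn1
      rw [if_neg (by omega), if_pos rfl]
      have hg0 : (∑' l : ℕ, ((F 0 l).ncard : ℂ) * (α₁ (0 + l) * α₂ ((1 - 0) + l))) =
          ∑' l : ℕ, (κ : ℂ) ^ l * (α₁ l * α₂ (l + 1)) := by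
        refine tsum_congr fun l => ?_
        rw [hC0 (by omega) l, show (0 : ℕ) + l = l from by omega,
          show (1 : ℕ) - 0 + l = l + 1 from by omega]
        push_cast
        ring
      have hg1 : (∑' l : ℕ, ((F 1 l).ncard : ℂ) * (α₁ (1 + l) * α₂ ((1 - 1) + l))) =
          ∑' l : ℕ, (κ : ℂ) ^ l * (α₁ (l + 1) * α₂ l) := by
        refine tsum_congr fun l => ?_
        rw [hCn (by omega) l, show (1 : ℕ) + l = l + 1 from by omega,
          show (1 : ℕ) - 1 + l = l from by omega]
        push_cast
        ring
      have hA : Summable (fun l : ℕ => (κ : ℂ) ^ l * (α₁ l * α₂ (l + 1))) := by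
        refine (hslN 0 (by omega)).congr fun l => ?_
        rw [hC0 (by omega) l, show (0 : ℕ) + l = l from by omega,
          show (1 : ℕ) - 0 + l = l + 1 from by omega]
        push_cast
        ring
      have hB : Summable (fun l : ℕ => (κ : ℂ) ^ l * (α₁ (l + 1) * α₂ l)) := by
        refine (hslN 1 (by omega)).congr fun l => ?_
        rw [hCn (by omega) l, show (1 : ℕ) + l = l + 1 from by omega,
          show (1 : ℕ) - 1 + l = l from by omega]
        push_cast
        ring
      rw [Finset.sum_range_succ, Finset.sum_range_one, hg0, hg1, ← Summable.tsum_add hA hB]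
      exact tsum_congr fun l => by ring
    · -- n ≥ 2
      rw [if_neg hn0, if_neg (by omega)]
      have hg0 : (∑' l : ℕ, ((F 0 l).ncard : ℂ) * (α₁ (0 + l) * α₂ ((n - 0) + l))) =
          ∑' l : ℕ, (κ : ℂ) ^ l * (α₁ l * α₂ (l + n)) := by
        refine tsum_congr fun l => ?_
        rw [hC0 hn0 l, show (0 : ℕ) + l = l from by omega,
          show n - 0 + l = l + n from by omega]
        push_cast
        ring
      have hgn : (∑' l : ℕ, ((F n l).ncard : ℂ) * (α₁ (n + l) * α₂ ((n - n) + l))) =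
          ∑' l : ℕ, (κ : ℂ) ^ l * (α₁ (l + n) * α₂ l) := by
        refine tsum_congr fun l => ?_
        rw [hCn hn0 l, show n + l = l + n from by omega, show n - n + l = l from by omega]
        push_cast
        ring
      have hA : Summable (fun l : ℕ => (κ : ℂ) ^ l * (α₁ l * α₂ (l + n))) := by
        refine (hslN 0 (by omega)).congr fun l => ?_
        rw [hC0 hn0 l, show (0 : ℕ) + l = l from by omega, show n - 0 + l = l + n from by omega]
        push_cast
        ring
      have hB : Summable (fun l : ℕ => (κ : ℂ) ^ l * (α₁ (l + n) * α₂ l)) := by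
        refine (hslN n (by omega)).congr fun l => ?_
        rw [hCn hn0 l, show n + l = l + n from by omega, show n - n + l = l from by omega]
        push_cast
        ring
      have hgi : ∀ i, 0 < i → i < n →
          (∑' l : ℕ, ((F i l).ncard : ℂ) * (α₁ (i + l) * α₂ ((n - i) + l))) =
          α₁ i * α₂ (n - i) +
            ∑' l : ℕ, ((κ : ℂ) - 1) * (κ : ℂ) ^ l * (α₁ (l + 1 + i) * α₂ (l + 1 + (n - i))) := by
        intro i h0 h1
        rw [Summable.tsum_eq_zero_add (hslN i (by omega))]
        congr 1
        · rw [(hCi i h0 h1).1, show i + 0 = i from by omega, show (n - i) + 0 = n - i from by omega]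
          norm_num
        · refine tsum_congr fun l => ?_
          rw [(hCi i h0 h1).2 l, show i + (l + 1) = l + 1 + i from by omega,
            show (n - i) + (l + 1) = l + 1 + (n - i) from by omega]
          rw [Nat.cast_mul, Nat.cast_pow, Nat.cast_sub hκ, Nat.cast_one]
      have hrange : Finset.range (n+1) = insert 0 (insert n (Finset.Ioo 0 n)) := by
        ext j
        simp only [Finset.mem_range, Finset.mem_insert, Finset.mem_Ioo]
        omega
      rw [hrange, Finset.sum_insert (by simp only [Finset.mem_insert, Finset.mem_Ioo]; omega),
        Finset.sum_insert (by simp only [Finset.mem_Ioo]; omega)]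
      rw [hg0, hgn]
      rw [Finset.sum_congr rfl (fun i hi => by
        rw [hgi i (by simp only [Finset.mem_Ioo] at hi; omega)
          (by simp only [Finset.mem_Ioo] at hi; omega)]), Finset.sum_add_distrib]
      have hsplit : (∑' l : ℕ, (κ : ℂ) ^ l * (α₁ l * α₂ (l + n) + α₁ (l + n) * α₂ l)) =
          (∑' l : ℕ, (κ : ℂ) ^ l * (α₁ l * α₂ (l + n))) +
            ∑' l : ℕ, (κ : ℂ) ^ l * (α₁ (l + n) * α₂ l) := by
        rw [← Summable.tsum_add hA hB]
        exact tsum_congr fun l => by ring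
      rw [hsplit]
      ring
end
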